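/- arXiv:2403.12324 — 3 statements merged into one kernel-verified Lean document; each statement's English description precedes it below -/
import Mathlib

section
/- Chain rule for pragmatic information: let I, I', M, M' be nonempty finite types. Let P be a strictly positive probability vector on I × I' × M × M' (joint law of outcomes and messages), and let Q be a strictly positive probability vector on I × I' (joint prior). Write φ(m,m') = Σ_{i,i'} P(i,i',m,m'), P(i,i'|m,m') = P(i,i',m,m')/φ(m,m'), P(i|m,m') = Σ_{i'} P(i,i'|m,m'), P(i'|i,m,m') = P(i,i'|m,m')/P(i|m,m'), Q₁(i) = Σ_{i'} Q(i,i'), and Q(i'|i) = Q(i,i')/Q₁(i). Then the joint pragmatic information Σ_{i,i',m,m'} P(i,i',m,m') * log₂(P(i,i'|m,m')/Q(i,i')) equals Σ_{i,i',m,m'} P(i,i',m,m') * log₂(P(i|m,m')/Q₁(i)) + Σ_{i,i',m,m'} P(i,i',m,m') * log₂(P(i'|i,m,m')/Q(i'|i)), i.e., the joint pragmatic information is the pragmatic information about the first outcome plus the conditional pragmatic information about the second outcome given the first. -/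
/-! The identity holds term by term: for each outcome pair and message pair, the ratio
`P(i,i'|m,m') / Q(i,i')` factors as `(P(i|m,m') / Q₁(i)) * (P(i'|i,m,m') / Q(i'|i))`,
and `logb 2` turns this product into a sum. -/

open Finset

theorem Real.logb_div_eq_logb_div_add_logb_div_div {b p p₁ q q₁ : ℝ}
    (hp : p ≠ 0) (hp₁ : p₁ ≠ 0) (hq : q ≠ 0) (hq₁ : q₁ ≠ 0) :
    logb b (p / q) = logb b (p₁ / q₁) + logb b (p / p₁ / (q / q₁)) := by
  rw [← logb_mul (by positivity) (by positivity)]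
  congr 1
  field_simp

theorem pragmatic_info_chain_rule_general
    {I I' M M' : Type*} [Fintype I] [Fintype I'] [Fintype M] [Fintype M']
    (P : I → I' → M → M' → ℝ) (Q : I → I' → ℝ)
    (hP : ∀ i i' m m', 0 < P i i' m m')
    (hQ : ∀ i i', 0 < Q i i') :
    (∑ i, ∑ i', ∑ m, ∑ m', P i i' m m' *
        Real.logb 2 ((P i i' m m' / (∑ j, ∑ j', P j j' m m')) / Q i i')) =
    (∑ i, ∑ i', ∑ m, ∑ m', P i i' m m' *
        Real.logb 2 (((∑ j', P i j' m m') / (∑ j, ∑ j', P j j' m m')) / (∑ j', Q i j'))) +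
    (∑ i, ∑ i', ∑ m, ∑ m', P i i' m m' *
        Real.logb 2 (((P i i' m m' / (∑ j, ∑ j', P j j' m m')) /
            ((∑ j', P i j' m m') / (∑ j, ∑ j', P j j' m m'))) /
          (Q i i' / ∑ j', Q i j'))) := by
  simp only [← sum_add_distrib, ← mul_add]
  refine sum_congr rfl fun i _ => sum_congr rfl fun i' _ =>
    sum_congr rfl fun m _ => sum_congr rfl fun m' _ => ?_
  have hPi : 0 < ∑ j', P i j' m m' :=
    (hP i i' m m').trans_le (single_le_sum (fun j' _ => (hP i j' m m').le) (mem_univ i'))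
  have hφ : 0 < ∑ j, ∑ j', P j j' m m' :=
    hPi.trans_le (single_le_sum (fun j _ => sum_nonneg fun j' _ => (hP j j' m m').le)
      (mem_univ i))
  have hQi : 0 < ∑ j', Q i j' :=
    (hQ i i').trans_le (single_le_sum (fun j' _ => (hQ i j').le) (mem_univ i'))
  rw [Real.logb_div_eq_logb_div_add_logb_div_div (div_pos (hP i i' m m') hφ).ne'
    (div_pos hPi hφ).ne' (hQ i i').ne' hQi.ne']

/-- **Chain rule for pragmatic information.** Let `P` be the strictly positive joint
law on outcomes `(i, i')` and messages `(m, m')`, and `Q` the strictly positive joint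
prior on `(i, i')`.  Writing `φ(m,m') = ∑_{i,i'} P i i' m m'` for the message marginal,
the joint pragmatic information equals the pragmatic information about the first
outcome plus the conditional pragmatic information about the second outcome given
the first. -/
theorem pragmatic_info_chain_rule
    {I I' M M' : Type*} [Fintype I] [Fintype I'] [Fintype M] [Fintype M']
    [Nonempty I] [Nonempty I'] [Nonempty M] [Nonempty M']
    (P : I → I' → M → M' → ℝ) (Q : I → I' → ℝ)
    (hP : ∀ i i' m m', 0 < P i i' m m')
    (hPsum : ∑ i, ∑ i', ∑ m, ∑ m', P i i' m m' = 1)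
    (hQ : ∀ i i', 0 < Q i i')
    (hQsum : ∑ i, ∑ i', Q i i' = 1) :
    (∑ i, ∑ i', ∑ m, ∑ m', P i i' m m' *
        Real.logb 2 ((P i i' m m' / (∑ j, ∑ j', P j j' m m')) / Q i i')) =
    (∑ i, ∑ i', ∑ m, ∑ m', P i i' m m' *
        Real.logb 2 (((∑ j', P i j' m m') / (∑ j, ∑ j', P j j' m m')) / (∑ j', Q i j'))) +
    (∑ i, ∑ i', ∑ m, ∑ m', P i i' m m' *
        Real.logb 2 (((P i i' m m' / (∑ j, ∑ j', P j j' m m')) /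
            ((∑ j', P i j' m m') / (∑ j, ∑ j', P j j' m m'))) /
          (Q i i' / ∑ j', Q i j'))) :=
  pragmatic_info_chain_rule_general P Q hP hQ
end

section
/- Pragmatic information dominates mutual information: let M and Ω be nonempty finite types, let P be a strictly positive probability vector on Ω × M with marginals p̄(i) = Σ_m P(i,m) and φ(m) = Σ_i P(i,m), and let q be a strictly positive probability vector on Ω. Then Φ = Σ_{i,m} P(i,m) * log₂(P(i|m)/q(i)) ≥ I(M;Ω) = Σ_{i,m} P(i,m) * log₂(P(i,m)/(p̄(i) φ(m))), with equality if and only if p̄ = q. -/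
/-! Splitting `log (P(i|m) / q i) = log (P(i,m) / (p̄ i * φ m)) + log (p̄ i / q i)` gives
`Φ = I(M;Ω) + D(p̄ ‖ q)`, so the claim is Gibbs' inequality with its equality case. That in turn
follows from `p log (p / q) = q * klFun (p / q) + (p - q)`, since `klFun x = x log x + 1 - x` is
nonnegative on `[0, ∞)` and vanishes only at `x = 1`. -/

open Real Finset InformationTheory

lemma mul_log_div_eq_mul_klFun_add {p q : ℝ} (hq : q ≠ 0) :
    p * log (p / q) = q * klFun (p / q) + (p - q) := by
  rw [klFun_apply]
  field_simp
  ring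

lemma mul_klFun_div_nonneg {p q : ℝ} (hp : 0 ≤ p) (hq : 0 < q) : 0 ≤ q * klFun (p / q) :=
  mul_nonneg hq.le (klFun_nonneg (div_nonneg hp hq.le))

section Gibbs

variable {ι : Type*} [Fintype ι] {b : ℝ} {p q : ι → ℝ}

lemma sum_mul_logb_div_eq_sum_mul_klFun (hq : ∀ i, 0 < q i) (hpq : ∑ i, p i = ∑ i, q i) :
    ∑ i, p i * logb b (p i / q i) = (∑ i, q i * klFun (p i / q i)) / log b := by
  have hlog : ∑ i, p i * log (p i / q i) = ∑ i, q i * klFun (p i / q i) := by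
    simp only [mul_log_div_eq_mul_klFun_add (hq _).ne', sum_add_distrib, sum_sub_distrib, hpq,
      sub_self, add_zero]
  simp only [logb, ← mul_div_assoc, ← sum_div, hlog]

theorem sum_mul_logb_div_nonneg (hb : 1 < b) (hp : ∀ i, 0 ≤ p i) (hq : ∀ i, 0 < q i)
    (hpq : ∑ i, p i = ∑ i, q i) : 0 ≤ ∑ i, p i * logb b (p i / q i) := by
  rw [sum_mul_logb_div_eq_sum_mul_klFun hq hpq]
  exact div_nonneg (sum_nonneg fun i _ => mul_klFun_div_nonneg (hp i) (hq i)) (log_pos hb).le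

theorem sum_mul_logb_div_eq_zero_iff (hb : 1 < b) (hp : ∀ i, 0 ≤ p i) (hq : ∀ i, 0 < q i)
    (hpq : ∑ i, p i = ∑ i, q i) : ∑ i, p i * logb b (p i / q i) = 0 ↔ p = q := by
  rw [sum_mul_logb_div_eq_sum_mul_klFun hq hpq, div_eq_zero_iff, or_iff_left (log_pos hb).ne',
    sum_eq_zero_iff_of_nonneg fun i _ => mul_klFun_div_nonneg (hp i) (hq i), funext_iff]
  refine forall_congr' fun i => ?_
  rw [mul_eq_zero, or_iff_right (hq i).ne', klFun_eq_zero_iff (div_nonneg (hp i) (hq i).le),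
    div_eq_one_iff_eq (hq i).ne', iff_true_intro (mem_univ i), true_implies]

end Gibbs

lemma logb_div_div_eq_logb_div_mul_add {b x r c y : ℝ} (hx : 0 < x) (hr : 0 < r) (hc : 0 < c)
    (hy : 0 < y) : logb b (x / c / y) = logb b (x / (r * c)) + logb b (r / y) := by
  rw [← logb_mul (by positivity) (by positivity)]
  congr 1
  field_simp

theorem sum_sum_mul_logb_cond_div_eq {ι κ : Type*} [Fintype ι] [Fintype κ] (b : ℝ)
    (P : ι → κ → ℝ) (hP : ∀ i m, 0 < P i m) (q : ι → ℝ) (hq : ∀ i, 0 < q i) :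
    ∑ i, ∑ m, P i m * logb b ((P i m / ∑ j, P j m) / q i) =
      ∑ i, ∑ m, P i m * logb b (P i m / ((∑ m', P i m') * (∑ j, P j m))) +
        ∑ i, (∑ m, P i m) * logb b ((∑ m, P i m) / q i) := by
  rw [← sum_add_distrib]
  refine sum_congr rfl fun i _ => ?_
  rw [sum_mul, ← sum_add_distrib]
  refine sum_congr rfl fun m _ => ?_
  have hrow : 0 < ∑ m', P i m' :=
    (hP i m).trans_le (single_le_sum (fun m' _ => (hP i m').le) (mem_univ m))
  have hcol : 0 < ∑ j, P j m :=
    (hP i m).trans_le (single_le_sum (f := fun j => P j m) (fun j _ => (hP j m).le) (mem_univ i))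
  rw [logb_div_div_eq_logb_div_mul_add (hP i m) hrow hcol (hq i), mul_add]

theorem pragmatic_info_ge_mutual_info_general
    {Ω M : Type*} [Fintype Ω] [Fintype M]
    (P : Ω → M → ℝ)
    (hP : ∀ i m, 0 < P i m) (hPsum : ∑ i, ∑ m, P i m = 1)
    (q : Ω → ℝ) (hq : ∀ i, 0 < q i) (hqsum : ∑ i, q i = 1) :
    (∑ i, ∑ m, P i m *
        Real.logb 2 (P i m / ((∑ m', P i m') * (∑ j, P j m)))) ≤
      (∑ i, ∑ m, P i m * Real.logb 2 ((P i m / ∑ j, P j m) / q i)) ∧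
    ((∑ i, ∑ m, P i m * Real.logb 2 ((P i m / ∑ j, P j m) / q i)) =
        (∑ i, ∑ m, P i m *
          Real.logb 2 (P i m / ((∑ m', P i m') * (∑ j, P j m)))) ↔
      (fun i => ∑ m, P i m) = q) := by
  have hpbar : ∀ i, 0 ≤ ∑ m, P i m := fun i => sum_nonneg fun m _ => (hP i m).le
  have hmass : ∑ i, ∑ m, P i m = ∑ i, q i := hPsum.trans hqsum.symm
  rw [sum_sum_mul_logb_cond_div_eq 2 P hP q hq, add_eq_left,
    ← sum_mul_logb_div_eq_zero_iff one_lt_two hpbar hq hmass]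
  exact ⟨le_add_of_nonneg_right (sum_mul_logb_div_nonneg one_lt_two hpbar hq hmass), Iff.rfl⟩

/-- **Pragmatic information dominates mutual information:** `Φ ≥ I(M;Ω)`, with
equality if and only if the outcome marginal `p̄` of the joint law equals the
prior `q`. -/
theorem pragmatic_info_ge_mutual_info
    {Ω M : Type*} [Fintype Ω] [Fintype M] [Nonempty Ω] [Nonempty M]
    (P : Ω → M → ℝ)
    (hP : ∀ i m, 0 < P i m) (hPsum : ∑ i, ∑ m, P i m = 1)
    (q : Ω → ℝ) (hq : ∀ i, 0 < q i) (hqsum : ∑ i, q i = 1) :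
    (∑ i, ∑ m, P i m *
        Real.logb 2 (P i m / ((∑ m', P i m') * (∑ j, P j m)))) ≤
      (∑ i, ∑ m, P i m * Real.logb 2 ((P i m / ∑ j, P j m) / q i)) ∧
    ((∑ i, ∑ m, P i m * Real.logb 2 ((P i m / ∑ j, P j m) / q i)) =
        (∑ i, ∑ m, P i m *
          Real.logb 2 (P i m / ((∑ m', P i m') * (∑ j, P j m)))) ↔
      (fun i => ∑ m, P i m) = q) :=
  pragmatic_info_ge_mutual_info_general P hP hPsum q hq hqsum
end

section
/- Vanishing pragmatic information per trial for the one-armed bandit: fix π ∈ [0,1] and let (w_T) be any sequence of natural numbers with 0 ≤ w_T ≤ T for each T. Define Φ(T) = π * { ((w_T+2)/(T+3)) * log₂( ((w_T+2)(T+2)) / ((T+3)(w_T+1)) ) + ((T-w_T+1)/(T+3)) * log₂( (T+2)/(T+3) ) } + (1-π) * { ((w_T+1)/(T+3)) * log₂( (T+2)/(T+3) ) + ((T-w_T+2)/(T+3)) * log₂( ((T-w_T+2)(T+2)) / ((T+3)(T-w_T+1)) ) }. Then Φ(T) → 0 as T → ∞. -/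
/-!
The outcome of the next play moves the Laplace estimate `q = (w+1)/(T+2)` to
`p = (w+2)/(T+3)` (payout) or `(w+1)/(T+3)` (no payout), and the pragmatic information is the
`π`-weighted average of the two Bernoulli divergences `D(p ‖ q)`. By `log x ≤ x - 1` such a
divergence is at most the χ²-divergence `(p - q)² / (q (1 - q))`, and for one step of the rule
of succession `p - q = (1 - q) / (T + 3)`, so each divergence is `O(1 / T)`.
-/

open Filter

namespace Real

lemma sub_le_mul_log_div {p q : ℝ} (hp : 0 ≤ p) (hq : 0 < q) : p - q ≤ p * log (p / q) := by
  have h := InformationTheory.klFun_nonneg (div_nonneg hp hq.le)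
  rw [InformationTheory.klFun_apply] at h
  have h' := mul_nonneg hq.le h
  field_simp at h'
  linarith

lemma mul_log_div_le {p q : ℝ} (hp : 0 ≤ p) (hq : 0 < q) :
    p * log (p / q) ≤ p * (p / q - 1) := by
  rcases hp.eq_or_lt with rfl | hp
  · simp
  · exact mul_le_mul_of_nonneg_left (log_le_sub_one_of_pos (by positivity)) hp.le

end Real

section BanditInfo

open Real

noncomputable def bernoulliKL (p q : ℝ) : ℝ :=
  p * log (p / q) + (1 - p) * log ((1 - p) / (1 - q))

lemma bernoulliKL_nonneg {p q : ℝ} (hp0 : 0 ≤ p) (hp1 : p ≤ 1) (hq0 : 0 < q) (hq1 : q < 1) :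
    0 ≤ bernoulliKL p q := by
  have h₁ := sub_le_mul_log_div hp0 hq0
  have h₂ := sub_le_mul_log_div (sub_nonneg.2 hp1) (sub_pos.2 hq1)
  unfold bernoulliKL
  linarith

lemma bernoulliKL_le_chiSq {p q : ℝ} (hp0 : 0 ≤ p) (hp1 : p ≤ 1) (hq0 : 0 < q) (hq1 : q < 1) :
    bernoulliKL p q ≤ (p - q) ^ 2 / (q * (1 - q)) := by
  have h₁ := mul_log_div_le hp0 hq0
  have h₂ := mul_log_div_le (sub_nonneg.2 hp1) (sub_pos.2 hq1)
  have hq1' : 0 < 1 - q := sub_pos.2 hq1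
  have hchi : p * (p / q - 1) + (1 - p) * ((1 - p) / (1 - q) - 1) =
      (p - q) ^ 2 / (q * (1 - q)) := by
    field_simp
    ring
  unfold bernoulliKL
  linarith

/-- Laplace's rule of succession `π̂(w, T)`. -/
noncomputable def laplaceEstimate (w T : ℝ) : ℝ := (w + 1) / (T + 2)

section Laplace

variable {w T : ℝ}

lemma one_sub_laplaceEstimate (hT : T + 2 ≠ 0) :
    1 - laplaceEstimate w T = laplaceEstimate (T - w) T := by
  unfold laplaceEstimate
  field_simp
  ring

lemma laplaceEstimate_pos (hw : 0 ≤ w) (hwT : w ≤ T) : 0 < laplaceEstimate w T :=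
  div_pos (by linarith) (by linarith)

lemma laplaceEstimate_lt_one (hw : 0 ≤ w) (hwT : w ≤ T) : laplaceEstimate w T < 1 :=
  (div_lt_one (by linarith)).2 (by linarith)

lemma laplaceEstimate_succ_succ : laplaceEstimate (w + 1) (T + 1) = (w + 2) / (T + 3) := by
  unfold laplaceEstimate
  ring_nf

lemma chiSq_laplaceEstimate_succ (hw : 0 ≤ w) (hwT : w ≤ T) :
    (laplaceEstimate (w + 1) (T + 1) - laplaceEstimate w T) ^ 2 /
        (laplaceEstimate w T * (1 - laplaceEstimate w T)) =
      (T - w + 1) / ((T + 3) ^ 2 * (w + 1)) := by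
  have hT2 : T + 2 ≠ 0 := by linarith
  have hT3 : T + 3 ≠ 0 := by linarith
  have hTw : T - w + 1 ≠ 0 := by linarith
  rw [one_sub_laplaceEstimate hT2, laplaceEstimate_succ_succ]
  unfold laplaceEstimate
  field_simp
  ring

end Laplace

/-- The pragmatic information, in bits, of a payout after `w` payouts in `T` plays. -/
noncomputable def payoutInfo (T w : ℝ) : ℝ :=
  (w + 2) / (T + 3) * logb 2 ((w + 2) * (T + 2) / ((T + 3) * (w + 1))) +
    (T - w + 1) / (T + 3) * logb 2 ((T + 2) / (T + 3))

section PayoutInfo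

variable {w T : ℝ}

lemma payoutInfo_eq_bernoulliKL (hw : 0 ≤ w) (hwT : w ≤ T) :
    payoutInfo T w =
      bernoulliKL (laplaceEstimate (w + 1) (T + 1)) (laplaceEstimate w T) / log 2 := by
  have hT2 : T + 2 ≠ 0 := by linarith
  have hT3 : T + 3 ≠ 0 := by linarith
  have hTw : T - w + 1 ≠ 0 := by linarith
  have hratio : (w + 2) / (T + 3) / laplaceEstimate w T =
      (w + 2) * (T + 2) / ((T + 3) * (w + 1)) := by
    unfold laplaceEstimate; field_simp
  have hcompl : 1 - (w + 2) / (T + 3) = (T - w + 1) / (T + 3) := by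
    field_simp; ring
  have hcompl_ratio : (T - w + 1) / (T + 3) / laplaceEstimate (T - w) T = (T + 2) / (T + 3) := by
    unfold laplaceEstimate; field_simp
  rw [payoutInfo, bernoulliKL, laplaceEstimate_succ_succ, one_sub_laplaceEstimate hT2, hratio,
    hcompl, hcompl_ratio, logb, logb]
  ring

lemma payoutInfo_mem_Icc (hw : 0 ≤ w) (hwT : w ≤ T) :
    payoutInfo T w ∈ Set.Icc 0 (1 / (T + 3) / log 2) := by
  have hp0 := laplaceEstimate_pos (w := w + 1) (T := T + 1) (by linarith) (by linarith)
  have hp1 := laplaceEstimate_lt_one (w := w + 1) (T := T + 1) (by linarith) (by linarith)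
  have hq0 := laplaceEstimate_pos hw hwT
  have hq1 := laplaceEstimate_lt_one hw hwT
  have hchi : (T - w + 1) / ((T + 3) ^ 2 * (w + 1)) ≤ 1 / (T + 3) := by
    rw [div_le_div_iff₀ (mul_pos (pow_pos (by linarith) 2) (by linarith)) (by linarith)]
    nlinarith
  rw [payoutInfo_eq_bernoulliKL hw hwT]
  refine ⟨div_nonneg (bernoulliKL_nonneg hp0.le hp1.le hq0 hq1) (log_nonneg one_le_two), ?_⟩
  gcongr
  calc bernoulliKL (laplaceEstimate (w + 1) (T + 1)) (laplaceEstimate w T)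
      ≤ (T - w + 1) / ((T + 3) ^ 2 * (w + 1)) :=
        chiSq_laplaceEstimate_succ hw hwT ▸ bernoulliKL_le_chiSq hp0.le hp1.le hq0 hq1
    _ ≤ 1 / (T + 3) := hchi

end PayoutInfo

end BanditInfo

/-- **Vanishing pragmatic information per trial for the one-armed bandit:** for a
payout probability `π ∈ [0,1]` and any sequence of win counts `w T ≤ T`, the
pragmatic information conveyed by the outcome of the `(T+1)`-st play (with Laplace
Rule-of-Succession estimates) tends to `0` as `T → ∞`. -/
theorem bandit_pragmatic_info_tendsto_zero
    (π : ℝ) (hπ0 : 0 ≤ π) (hπ1 : π ≤ 1)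
    (w : ℕ → ℕ) (hw : ∀ T, w T ≤ T) :
    Filter.Tendsto (fun T : ℕ =>
      let t : ℝ := (T : ℝ)
      let v : ℝ := (w T : ℝ)
      π * ((v + 2) / (t + 3) *
              Real.logb 2 ((v + 2) * (t + 2) / ((t + 3) * (v + 1))) +
            (t - v + 1) / (t + 3) * Real.logb 2 ((t + 2) / (t + 3))) +
      (1 - π) * ((v + 1) / (t + 3) * Real.logb 2 ((t + 2) / (t + 3)) +
            (t - v + 2) / (t + 3) *
              Real.logb 2 ((t - v + 2) * (t + 2) / ((t + 3) * (t - v + 1)))))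
      Filter.atTop (nhds 0) := by
  have hwT (T : ℕ) : (w T : ℝ) ≤ T := by exact_mod_cast hw T
  -- a failure is a payout for the complementary count `T - w T`
  have hmix (T : ℕ) : π * payoutInfo T (w T) + (1 - π) * payoutInfo T (T - w T) ∈
      Set.Icc 0 (1 / ((T : ℝ) + 3) / Real.log 2) :=
    convex_Icc _ _ (payoutInfo_mem_Icc (Nat.cast_nonneg _) (hwT T))
      (payoutInfo_mem_Icc (sub_nonneg.2 (hwT T)) (sub_le_self _ (Nat.cast_nonneg _)))
      hπ0 (sub_nonneg.2 hπ1) (add_sub_cancel π 1)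
  have hbound : Tendsto (fun T : ℕ => 1 / ((T : ℝ) + 3) / Real.log 2) atTop (nhds 0) := by
    rw [← zero_div (Real.log 2)]
    exact (tendsto_const_nhds.div_atTop
      (tendsto_atTop_add_const_right _ 3 tendsto_natCast_atTop_atTop)).div_const _
  refine (squeeze_zero (fun T => (hmix T).1) (fun T => (hmix T).2) hbound).congr fun T => ?_
  simp only [payoutInfo, sub_sub_cancel]
  ring
end
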